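/- Let m = 2p ≥ 2 be an even integer and let Ŵ⁺ be the group with presentation ⟨z, s₀, s₁, s_m | z² = s₀² = s₁² = s_m² = 1, (s₀s₁)² = (s₀s_m)² = (s₁s_m)^m = z, z s_i = s_i z for i ∈ {0,1,m}⟩. Then Ŵ⁺ is a finite group of order 8m. -/

import Mathlib

/-- Generators of the double covering of `W = ℤ₂ × D_{2m}`: the central element `z`
and the lifted reflections `s₀`, `s₁`, `s_m`. -/
inductive Gen : Type
  | z | s0 | s1 | sm
deriving DecidableEq

open FreeGroup

/-- Relators of the positive double covering `Ŵ⁺` of `ℤ₂ × D_{2m}` for even `m`: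
`z² = s₀² = s₁² = s_m² = 1`, `(s₀s₁)² = (s₀s_m)² = (s₁s_m)^m = z`,
and `z` commutes with the generators. -/
def relsEvenPos (m : ℕ) : Set (FreeGroup Gen) :=
  { (of Gen.z) ^ 2, (of Gen.s0) ^ 2, (of Gen.s1) ^ 2, (of Gen.sm) ^ 2,
    (of Gen.s0 * of Gen.s1) ^ 2 * (of Gen.z)⁻¹,
    (of Gen.s0 * of Gen.sm) ^ 2 * (of Gen.z)⁻¹,
    (of Gen.s1 * of Gen.sm) ^ m * (of Gen.z)⁻¹,
    of Gen.z * of Gen.s0 * (of Gen.z)⁻¹ * (of Gen.s0)⁻¹,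
    of Gen.z * of Gen.s1 * (of Gen.z)⁻¹ * (of Gen.s1)⁻¹,
    of Gen.z * of Gen.sm * (of Gen.z)⁻¹ * (of Gen.sm)⁻¹ }

/-!
Write `a = s₁ sₘ`, so that `a ^ (2m) = z ^ 2 = 1`. As in any group generated by two involutions,
`⟨a⟩` has index at most `2` in `⟨s₁, sₘ⟩`; and `⟨s₁, sₘ⟩` has index at most `2` in `Ŵ⁺`, because
conjugation by `s₀` sends `z`, `s₁`, `sₘ` to `z`, `z s₁`, `z sₘ`. Hence `|Ŵ⁺|` divides
`2m · 2 · 2 = 8m`; in particular `Ŵ⁺` is finite.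

For even `m = 2p`, the assignment `z ↦ r^m`, `s₀ ↦ r^p t`, `s₁ ↦ s`, `sₘ ↦ s r` maps `Ŵ⁺` onto the
central product of the dihedral group of order `4m` (rotation `r`, reflection `s`) with `ℤ/4 = ⟨t⟩`,
amalgamating `r^m` with `t^2`. This group has order `8m`, which gives the reverse inequality.
-/

namespace Subgroup

variable {G : Type*} [Group G]

theorem index_dvd_two_of_forall_mem_or_mul_mem {H : Subgroup G} (s : G)
    (h : ∀ x, x ∈ H ∨ s * x ∈ H) : H.index ∣ 2 := by
  have hsurj : Function.Surjective fun b : Bool => ((if b then 1 else s⁻¹ : G) : G ⧸ H) := by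
    intro q
    induction q using QuotientGroup.induction_on with
    | H x =>
      rcases h x with hx | hx
      · exact ⟨true, QuotientGroup.eq.mpr (by simpa using hx)⟩
      · exact ⟨false, QuotientGroup.eq.mpr (by simpa using hx)⟩
  have : Finite (G ⧸ H) := Finite.of_surjective _ hsurj
  have hle : H.index ≤ 2 := (Nat.card_le_card_of_surjective _ hsurj).trans_eq (by simp)
  have hne : H.index ≠ 0 := index_ne_zero_of_finite
  exact (Nat.dvd_prime Nat.prime_two).mpr (by omega)

theorem relIndex_dvd_two_of_forall_mem_or_mul_mem {H K : Subgroup G} {s : G} (hs : s ∈ K)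
    (h : ∀ x ∈ K, x ∈ H ∨ s * x ∈ H) : H.relIndex K ∣ 2 :=
  index_dvd_two_of_forall_mem_or_mul_mem ⟨s, hs⟩ fun x => by simpa [mem_subgroupOf] using h x x.2

theorem relIndex_zpowers_mul_closure_pair_dvd_two {u v : G} (hu : u * u = 1) (hv : v * v = 1) :
    (zpowers (u * v)).relIndex (closure {u, v}) ∣ 2 := by
  refine relIndex_dvd_two_of_forall_mem_or_mul_mem (subset_closure (Set.mem_insert _ _))
    fun x hx => ?_
  have hu_inv : u⁻¹ = u := inv_eq_of_mul_eq_one_right hu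
  have hv_inv : v⁻¹ = v := inv_eq_of_mul_eq_one_right hv
  have step_u : ∀ x, x ∈ zpowers (u * v) ∨ u * x ∈ zpowers (u * v) →
      u * x ∈ zpowers (u * v) ∨ u * (u * x) ∈ zpowers (u * v) := by
    rintro x (hx | hx)
    · exact .inr (by rwa [← mul_assoc, hu, one_mul])
    · exact .inl hx
  have step_v : ∀ x, x ∈ zpowers (u * v) ∨ u * x ∈ zpowers (u * v) →
      v * x ∈ zpowers (u * v) ∨ u * (v * x) ∈ zpowers (u * v) := by
    rintro x (hx | hx)
    · exact .inr (by rw [← mul_assoc]; exact mul_mem (mem_zpowers _) hx)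
    · have hvx : v * x = (u * v)⁻¹ * (u * x) := by
        rw [mul_inv_rev, hu_inv, hv_inv, mul_assoc, ← mul_assoc u, hu, one_mul]
      exact .inl (hvx ▸ mul_mem (inv_mem (mem_zpowers _)) hx)
  induction hx using closure_induction_left with
  | one => exact .inl (one_mem _)
  | mul_left y hy x _ ih =>
    rcases hy with h | h
    · exact (show y = u from h) ▸ step_u x ih
    · exact (show y = v from h) ▸ step_v x ih
  | inv_mul_cancel y hy x _ ih =>
    rcases hy with h | h
    · rw [show y = u from h, hu_inv]; exact step_u x ih
    · rw [show y = v from h, hv_inv]; exact step_v x ih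

end Subgroup

abbrev WposEven (m : ℕ) := PresentedGroup (relsEvenPos m)

namespace WposEven

open Subgroup

variable {m : ℕ}

def z : WposEven m := PresentedGroup.of Gen.z
def s₀ : WposEven m := PresentedGroup.of Gen.s0
def s₁ : WposEven m := PresentedGroup.of Gen.s1
def sₘ : WposEven m := PresentedGroup.of Gen.sm

theorem z_mul_z : (z * z : WposEven m) = 1 :=
  PresentedGroup.one_of_mem (x := of Gen.z * of Gen.z) (by simp [relsEvenPos, ← sq])

theorem s₀_mul_s₀ : (s₀ * s₀ : WposEven m) = 1 :=
  PresentedGroup.one_of_mem (x := of Gen.s0 * of Gen.s0) (by simp [relsEvenPos, ← sq])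

theorem s₁_mul_s₁ : (s₁ * s₁ : WposEven m) = 1 :=
  PresentedGroup.one_of_mem (x := of Gen.s1 * of Gen.s1) (by simp [relsEvenPos, ← sq])

theorem sₘ_mul_sₘ : (sₘ * sₘ : WposEven m) = 1 :=
  PresentedGroup.one_of_mem (x := of Gen.sm * of Gen.sm) (by simp [relsEvenPos, ← sq])

theorem s₀_mul_s₁_sq : ((s₀ * s₁) ^ 2 : WposEven m) = z :=
  PresentedGroup.mk_eq_mk_of_mul_inv_mem (by simp [relsEvenPos])

theorem s₀_mul_sₘ_sq : ((s₀ * sₘ) ^ 2 : WposEven m) = z :=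
  PresentedGroup.mk_eq_mk_of_mul_inv_mem (by simp [relsEvenPos])

theorem s₁_mul_sₘ_pow : ((s₁ * sₘ) ^ m : WposEven m) = z :=
  PresentedGroup.mk_eq_mk_of_mul_inv_mem (by simp [relsEvenPos])

theorem z_mul_s₀ : (z * s₀ : WposEven m) = s₀ * z :=
  PresentedGroup.mk_eq_mk_of_mul_inv_mem (by simp [relsEvenPos, mul_assoc])

theorem s₀_mul_z_mul_s₀ : (s₀ * z * s₀ : WposEven m) = z := by
  rw [← z_mul_s₀, mul_assoc, s₀_mul_s₀, mul_one]

theorem s₀_mul_s₁_mul_s₀ : (s₀ * s₁ * s₀ : WposEven m) = z * s₁ := by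
  rw [← s₀_mul_s₁_sq, sq, mul_assoc (s₀ * s₁) (s₀ * s₁), mul_assoc s₀ s₁ s₁, s₁_mul_s₁, mul_one]

theorem s₀_mul_sₘ_mul_s₀ : (s₀ * sₘ * s₀ : WposEven m) = z * sₘ := by
  rw [← s₀_mul_sₘ_sq, sq, mul_assoc (s₀ * sₘ) (s₀ * sₘ), mul_assoc s₀ sₘ sₘ, sₘ_mul_sₘ, mul_one]

theorem of_inv (g : Gen) : (PresentedGroup.of g : WposEven m)⁻¹ = PresentedGroup.of g :=
  inv_eq_of_mul_eq_one_right (by cases g; exacts [z_mul_z, s₀_mul_s₀, s₁_mul_s₁, sₘ_mul_sₘ])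

theorem z_mem_closure : (z : WposEven m) ∈ closure {s₁, sₘ} :=
  s₁_mul_sₘ_pow ▸ pow_mem (mul_mem (subset_closure (by simp)) (subset_closure (by simp))) m

theorem mem_closure_or_s₀_mul_mem (x : WposEven m) :
    x ∈ closure {s₁, sₘ} ∨ s₀ * x ∈ closure {s₁, sₘ} := by
  set D := closure ({s₁, sₘ} : Set (WposEven m))
  have step : ∀ y ∈ D, s₀ * y * s₀ ∈ D → ∀ x, x ∈ D ∨ s₀ * x ∈ D →
      y * x ∈ D ∨ s₀ * (y * x) ∈ D := by
    rintro y hy hy' x (hx | hx)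
    · exact .inl (mul_mem hy hx)
    · have : s₀ * (y * x) = s₀ * y * s₀ * (s₀ * x) := by
        rw [mul_assoc _ s₀, ← mul_assoc s₀ s₀, s₀_mul_s₀, one_mul, mul_assoc]
      exact .inr (this ▸ mul_mem hy' hx)
  have step_s₀ : ∀ x, x ∈ D ∨ s₀ * x ∈ D → s₀ * x ∈ D ∨ s₀ * (s₀ * x) ∈ D := by
    rintro x (hx | hx)
    · exact .inr (by rwa [← mul_assoc, s₀_mul_s₀, one_mul])
    · exact .inl hx
  have hs₁ : s₁ ∈ D := subset_closure (by simp)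
  have hsₘ : sₘ ∈ D := subset_closure (by simp)
  have step_of : ∀ g x, x ∈ D ∨ s₀ * x ∈ D →
      PresentedGroup.of g * x ∈ D ∨ s₀ * (PresentedGroup.of g * x) ∈ D
    | .z => step z z_mem_closure (by rw [s₀_mul_z_mul_s₀]; exact z_mem_closure)
    | .s0 => step_s₀
    | .s1 => step s₁ hs₁ (by rw [s₀_mul_s₁_mul_s₀]; exact mul_mem z_mem_closure hs₁)
    | .sm => step sₘ hsₘ (by rw [s₀_mul_sₘ_mul_s₀]; exact mul_mem z_mem_closure hsₘ)
  have hx : x ∈ closure (Set.range PresentedGroup.of) := by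
    rw [PresentedGroup.closure_range_of]; exact mem_top x
  induction hx using closure_induction_left with
  | one => exact .inl (one_mem _)
  | mul_left y hy x _ ih => obtain ⟨g, rfl⟩ := hy; exact step_of g x ih
  | inv_mul_cancel y hy x _ ih => obtain ⟨g, rfl⟩ := hy; rw [of_inv]; exact step_of g x ih

theorem card_dvd : Nat.card (WposEven m) ∣ 8 * m := by
  have hC : Nat.card (zpowers (s₁ * sₘ : WposEven m)) ∣ 2 * m := by
    rw [Nat.card_zpowers]
    exact orderOf_dvd_of_pow_eq_one (by rw [pow_mul', s₁_mul_sₘ_pow, sq, z_mul_z])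
  have hCD : zpowers (s₁ * sₘ : WposEven m) ≤ closure {s₁, sₘ} :=
    zpowers_le.mpr (mul_mem (subset_closure (by simp)) (subset_closure (by simp)))
  have hrel := relIndex_zpowers_mul_closure_pair_dvd_two (s₁_mul_s₁ (m := m)) sₘ_mul_sₘ
  have hidx := index_dvd_two_of_forall_mem_or_mul_mem s₀ (mem_closure_or_s₀_mul_mem (m := m))
  rw [← card_mul_index (zpowers _), ← relIndex_mul_index hCD]
  calc _ ∣ 2 * m * (2 * 2) := mul_dvd_mul hC (mul_dvd_mul hrel hidx)
    _ = 8 * m := by ring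

section Model

open DihedralGroup Multiplicative

variable (p : ℕ)

theorem four_mul_self_eq_zero : (4 * p : ZMod (4 * p)) = 0 := by
  exact_mod_cast ZMod.natCast_self (4 * p)

abbrev Cover := DihedralGroup (4 * p) × Multiplicative (ZMod 4)

def centralInvolution : Cover p := (r (2 * p), ofAdd 2)

theorem commute_centralInvolution (g : Cover p) : Commute g (centralInvolution p) := by
  have h : -(2 * p : ZMod (4 * p)) = 2 * p := by linear_combination -four_mul_self_eq_zero p
  obtain ⟨d | d, x⟩ := g <;>
    simp [Commute, SemiconjBy, centralInvolution, r_mul_r, r_mul_sr, sr_mul_r, add_comm,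
      mul_comm x, sub_eq_add_neg, h]

instance : (zpowers (centralInvolution p)).Normal where
  conj_mem n hn g := by
    obtain ⟨k, rfl⟩ := mem_zpowers_iff.mp hn
    rw [((commute_centralInvolution p g).zpow_right k).eq, mul_inv_cancel_right]
    exact zpow_mem (mem_zpowers _) k

abbrev Model := Cover p ⧸ zpowers (centralInvolution p)

theorem orderOf_centralInvolution : orderOf (centralInvolution p) = 2 := by
  refine orderOf_eq_prime ?_ fun h =>
    absurd (congrArg Prod.snd h) (show ofAdd (2 : ZMod 4) ≠ 1 by decide)
  simp only [centralInvolution, sq, Prod.mk_mul_mk, r_mul_r, Prod.mk_eq_one]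
  refine ⟨?_, by decide⟩
  rw [← r_zero]
  congr 1
  linear_combination four_mul_self_eq_zero p

theorem card_model : Nat.card (Model p) = 16 * p := by
  have h := card_eq_card_quotient_mul_card_subgroup (zpowers (centralInvolution p))
  rw [Nat.card_prod, DihedralGroup.nat_card, Nat.card_zpowers, orderOf_centralInvolution] at h
  simp only [Nat.card_eq_fintype_card, Fintype.card_multiplicative, ZMod.card] at h
  show Nat.card (_ ⧸ zpowers (centralInvolution p)) = _
  omega

def genImage : Gen → Cover p
  | .z => (r (2 * p), 1)
  | .s0 => (r p, ofAdd 1)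
  | .s1 => (sr 0, 1)
  | .sm => (sr 1, 1)

theorem pair_mem_zpowers_centralInvolution {a : ZMod (4 * p)} {x : Multiplicative (ZMod 4)}
    (h : a = 0 ∧ x = 1 ∨ a = 2 * p ∧ x = ofAdd 2) : (r a, x) ∈ zpowers (centralInvolution p) := by
  rcases h with ⟨rfl, rfl⟩ | ⟨rfl, rfl⟩
  exacts [one_mem _, mem_zpowers _]

theorem lift_genImage_mem (rel : FreeGroup Gen) (h : rel ∈ relsEvenPos (2 * p)) :
    FreeGroup.lift (genImage p) rel ∈ zpowers (centralInvolution p) := by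
  have h4 := four_mul_self_eq_zero p
  simp only [relsEvenPos, Set.mem_insert_iff, Set.mem_singleton_iff] at h
  rcases h with rfl | rfl | rfl | rfl | rfl | rfl | rfl | rfl | rfl | rfl <;>
    simp only [genImage, sq, _root_.map_mul, map_pow, _root_.map_inv, lift_apply_of,
      Prod.mk_mul_mk, Prod.inv_mk, Prod.pow_mk, r_mul_r, r_mul_sr, sr_mul_r, sr_mul_sr, inv_r,
      inv_sr, r_pow, r_zero, sub_self, sub_zero, zero_sub, mul_one, one_mul, one_pow, inv_one,
      add_neg_cancel, add_neg_cancel_comm, mul_inv_cancel, neg_add_rev, neg_neg, Nat.cast_mul,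
      Nat.cast_ofNat] <;>
    first
      | exact one_mem _
      | (apply pair_mem_zpowers_centralInvolution p (.inl ⟨?_, rfl⟩); linear_combination h4)
      | (apply pair_mem_zpowers_centralInvolution p (.inr ⟨?_, by decide⟩); ring1)
      | (apply pair_mem_zpowers_centralInvolution p (.inr ⟨?_, by decide⟩); linear_combination -h4)

def toModel : WposEven (2 * p) →* Model p :=
  PresentedGroup.toGroup (f := fun g => (genImage p g : Model p)) fun rel h => by
    have hlift : FreeGroup.lift (fun g => (genImage p g : Model p)) =
        (QuotientGroup.mk' _).comp (FreeGroup.lift (genImage p)) :=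
      FreeGroup.ext_hom _ _ fun g => by simp
    rw [hlift, MonoidHom.comp_apply, QuotientGroup.mk'_apply, QuotientGroup.eq_one_iff]
    exact lift_genImage_mem p rel h

theorem toModel_of (g : Gen) : toModel p (PresentedGroup.of g) = genImage p g :=
  PresentedGroup.toGroup.of _

theorem mk_mem_range_toModel (x : Cover p) : (x : Model p) ∈ (toModel p).range := by
  have hgen : ∀ g, (genImage p g : Model p) ∈ (toModel p).range := fun g => ⟨_, toModel_of p g⟩
  have hr1 : (((r 1, 1) : Cover p) : Model p) ∈ (toModel p).range := by
    simpa [genImage, ← QuotientGroup.mk_mul, sr_mul_sr] using mul_mem (hgen .s1) (hgen .sm)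
  have hr : ∀ k : ℤ, (((r k, 1) : Cover p) : Model p) ∈ (toModel p).range := fun k => by
    simpa [← QuotientGroup.mk_zpow, r_one_zpow] using zpow_mem hr1 k
  have ht : (((1, ofAdd 1) : Cover p) : Model p) ∈ (toModel p).range := by
    simpa [genImage, ← QuotientGroup.mk_mul, r_mul_r] using mul_mem (hgen .s0) (hr (-p))
  have htk : ∀ k : ℤ, (((1, ofAdd (k : ZMod 4)) : Cover p) : Model p) ∈ (toModel p).range :=
    fun k => by simpa [← QuotientGroup.mk_zpow, ← ofAdd_zsmul] using zpow_mem ht k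
  obtain ⟨d, x⟩ := x
  have hd : (((d, 1) : Cover p) : Model p) ∈ (toModel p).range := by
    cases d with
    | r i => obtain ⟨k, rfl⟩ := ZMod.intCast_surjective i; exact hr k
    | sr i =>
      obtain ⟨k, rfl⟩ := ZMod.intCast_surjective i
      simpa [genImage, ← QuotientGroup.mk_mul, sr_mul_r] using mul_mem (hgen .s1) (hr k)
  obtain ⟨l, rfl⟩ : ∃ l : ℤ, ofAdd (l : ZMod 4) = x :=
    ⟨_, (congrArg ofAdd (ZMod.intCast_zmod_cast (toAdd x))).trans (ofAdd_toAdd x)⟩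
  simpa [← QuotientGroup.mk_mul] using mul_mem hd (htk l)

theorem toModel_surjective : Function.Surjective (toModel p) := fun q =>
  QuotientGroup.induction_on q (mk_mem_range_toModel p)

end Model

end WposEven

/-- For even `m = 2p ≥ 2`, the positive double covering `Ŵ⁺` of `ℤ₂ × D_{2m}`
is a finite group of order `8m`. -/
theorem WposEven_card (m p : ℕ) (hp : 1 ≤ p) (hm : m = 2 * p) :
    Finite (PresentedGroup (relsEvenPos m)) ∧
      Nat.card (PresentedGroup (relsEvenPos m)) = 8 * m := by
  subst hm
  have hdvd : Nat.card (WposEven (2 * p)) ∣ 8 * (2 * p) := WposEven.card_dvd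
  have hne : Nat.card (WposEven (2 * p)) ≠ 0 := by
    rintro h
    rw [h, zero_dvd_iff] at hdvd
    omega
  have : Finite (WposEven (2 * p)) := Nat.finite_of_card_ne_zero hne
  refine ⟨this, le_antisymm (Nat.le_of_dvd (by omega) hdvd) ?_⟩
  calc 8 * (2 * p) = Nat.card (WposEven.Model p) := by rw [WposEven.card_model]; ring
    _ ≤ Nat.card (WposEven (2 * p)) :=
      Nat.card_le_card_of_surjective _ (WposEven.toModel_surjective p)
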